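/- arXiv:1509.06916 — 9 statements merged into one kernel-verified Lean document; each statement's English description precedes it below -/
import Mathlib

section
/- Let p_sd and p_sr be positive real numbers, and let p_b : ℝ → ℝ be a function that is continuous and monotone nondecreasing on the interval [0, p_sd + p_sr], satisfies 0 ≤ p_b(λ) ≤ 1 for all λ in this interval, p_b(0) = 0, and p_b(p_sd + p_sr) > 0. Define μ_s(λ) = p_sd + p_sr·(1 − p_b(λ)). Then there exists a unique λ̃ ∈ (0, p_sd + p_sr) such that μ_s(λ̃) = λ̃. -/
/-- Fixed-point existence and uniqueness underlying Theorem 1. -/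
theorem stmt0 (p_sd p_sr : ℝ) (hsd : 0 < p_sd) (hsr : 0 < p_sr)
    (p_b : ℝ → ℝ)
    (hcont : ContinuousOn p_b (Set.Icc 0 (p_sd + p_sr)))
    (hmono : MonotoneOn p_b (Set.Icc 0 (p_sd + p_sr)))
    (hrange : ∀ x ∈ Set.Icc (0 : ℝ) (p_sd + p_sr), 0 ≤ p_b x ∧ p_b x ≤ 1)
    (h0 : p_b 0 = 0)
    (h1 : 0 < p_b (p_sd + p_sr))
    (μ_s : ℝ → ℝ) (hμ : ∀ x, μ_s x = p_sd + p_sr * (1 - p_b x)) :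
    ∃! l, l ∈ Set.Ioo 0 (p_sd + p_sr) ∧ μ_s l = l := by
  set P := p_sd + p_sr with hP
  have hP0 : (0:ℝ) ≤ P := by positivity
  set g : ℝ → ℝ := fun x => μ_s x - x with hg
  have hgcont : ContinuousOn g (Set.Icc 0 P) := by
    have : ContinuousOn (fun x => p_sd + p_sr * (1 - p_b x) - x) (Set.Icc 0 P) := by
      fun_prop
    exact this.congr (fun x _ => by simp [hg, hμ x])
  have hg0 : g 0 = P := by simp [hg, hμ, h0, hP]
  have hgP : g P = -(p_sr * p_b P) - P + P := by
    simp [hg, hμ 0, hμ P]; ring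
  have hgPneg : g P < 0 := by
    rw [hgP]; nlinarith
  have hg0pos : 0 < g 0 := by rw [hg0]; positivity
  -- existence via IVT
  have hsub := intermediate_value_Icc' hP0 hgcont
  have h0mem : (0:ℝ) ∈ Set.Icc (g P) (g 0) := ⟨le_of_lt hgPneg, le_of_lt hg0pos⟩
  obtain ⟨c, hc, hgc⟩ := hsub h0mem
  have hc0 : c ≠ 0 := by
    rintro rfl; rw [hgc] at hg0pos; exact lt_irrefl _ hg0pos
  have hcP : c ≠ P := by
    rintro rfl; rw [hgc] at hgPneg; exact lt_irrefl _ hgPneg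
  have hcIoo : c ∈ Set.Ioo 0 P :=
    ⟨lt_of_le_of_ne hc.1 (Ne.symm hc0), lt_of_le_of_ne hc.2 hcP⟩
  have hfix : μ_s c = c := by
    have : μ_s c - c = 0 := hgc
    linarith
  refine ⟨c, ⟨hcIoo, hfix⟩, ?_⟩
  rintro y ⟨hy, hfy⟩
  by_contra hne
  have hyIcc : y ∈ Set.Icc 0 P := ⟨le_of_lt hy.1, le_of_lt hy.2⟩
  have hcIcc : c ∈ Set.Icc 0 P := hc
  rcases lt_or_gt_of_ne hne with hlt | hlt
  · have := hmono hyIcc hcIcc (le_of_lt hlt)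
    rw [hμ y] at hfy; rw [hμ c] at hfix; nlinarith
  · have := hmono hcIcc hyIcc (le_of_lt hlt)
    rw [hμ y] at hfy; rw [hμ c] at hfix; nlinarith
end

section
/- Let n ≥ 3 and B ≥ 1 be integers, let p_sr ≥ 0, p_rd > 0 and ρ ∈ [0,1] be real numbers with ρ·p_sr + p_rd ≤ 1, and set β = p_sr/p_rd and C_i = C(n−3+i, i). Define the (B+1)×(B+1) real matrix P by P(i, i+1) = ρ·p_sr for 0 ≤ i ≤ B−1, P(i, i−1) = (i/(n−3+i))·p_rd for 1 ≤ i ≤ B, P(i, i) = 1 − P(i, i+1) − P(i, i−1) (with absent entries taken as 0), and P(i, j) = 0 for |i−j| ≥ 2. Define π_i = C_i·β^i·ρ^i / (∑_{j=0}^{B} C_j·β^j·ρ^j) for 0 ≤ i ≤ B. Then ∑_{i=0}^{B} π_i = 1 and ∑_{i=0}^{B} π_i·P(i, j) = π_j for every 0 ≤ j ≤ B. -/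
/-!
The chain is a birth–death chain on {0, …, B}, so it suffices that the weights
aᵢ = Cᵢ βⁱ ρⁱ satisfy detailed balance a_{i+1}·P(i+1, i) = aᵢ·P(i, i+1): in the balance
equation at j, the probability flow from j - 1 and from j + 1 then cancels exactly the mass
that leaves j. Detailed balance is the identity C(m+1, i+1)·(i+1)/(m+1) = C(m, i) together
with β·p_rd = p_sr; normalising by the (positive) total weight gives π.
-/

open Finset

section BirthDeath

variable {B : ℕ} {up down : ℕ → ℝ} {P : ℕ → ℕ → ℝ}

theorem birthDeath_entry_eq
    (hup : ∀ i < B, P i (i + 1) = up i)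
    (hdown : ∀ i, 1 ≤ i → i ≤ B → P i (i - 1) = down i)
    (hdiag : ∀ i ≤ B, P i i =
      1 - (if i < B then up i else 0) - (if 1 ≤ i then down i else 0))
    (hzero : ∀ i ≤ B, ∀ j ≤ B, i + 2 ≤ j ∨ j + 2 ≤ i → P i j = 0)
    {i j : ℕ} (hi : i ≤ B) (hj : j ≤ B) :
    P i j = (if i + 1 = j then up i else 0) + (if i = j + 1 then down i else 0) +
      (if i = j then 1 - (if i < B then up i else 0) - (if 1 ≤ i then down i else 0)
        else 0) := by
  by_cases hij : i + 1 = j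
  · subst hij
    simp [hup i (by omega), show i ≠ i + 1 + 1 by omega]
  by_cases hji : i = j + 1
  · subst hji
    simpa [show j + 1 + 1 ≠ j by omega] using hdown (j + 1) (by omega) hi
  by_cases heq : i = j
  · subst heq
    simpa using hdiag i hi
  simp only [hij, hji, heq, if_false, add_zero]
  exact hzero i hi j hj (by omega)

theorem sum_mul_birthDeath_eq_of_detailed_balance {a : ℕ → ℝ}
    (hup : ∀ i < B, P i (i + 1) = up i)
    (hdown : ∀ i, 1 ≤ i → i ≤ B → P i (i - 1) = down i)
    (hdiag : ∀ i ≤ B, P i i =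
      1 - (if i < B then up i else 0) - (if 1 ≤ i then down i else 0))
    (hzero : ∀ i ≤ B, ∀ j ≤ B, i + 2 ≤ j ∨ j + 2 ≤ i → P i j = 0)
    (hbalance : ∀ i < B, a (i + 1) * down (i + 1) = a i * up i)
    {j : ℕ} (hj : j ≤ B) :
    ∑ i ∈ range (B + 1), a i * P i j = a j := by
  rw [sum_congr rfl fun i hi => by
    rw [birthDeath_entry_eq hup hdown hdiag hzero (mem_range_succ_iff.mp hi) hj]]
  simp only [mul_add, mul_ite, mul_zero, sum_add_distrib]
  rcases j with _ | k
  · simp only [Nat.add_eq_zero_iff, one_ne_zero, and_false, ↓reduceIte, sum_const_zero,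
      zero_add, sum_ite_eq', mem_range, lt_add_iff_pos_left, Order.lt_add_one_iff, zero_le,
      nonpos_iff_eq_zero, sub_zero]
    split_ifs with hB
    · linear_combination hbalance 0 hB
    · ring
  · have hk : k < B := hj
    simp only [Nat.add_right_cancel_iff, sum_ite_eq', mem_range, Order.lt_add_one_iff,
      Order.add_one_le_iff, le_add_iff_nonneg_left, zero_le, ↓reduceIte, hk, hk.le]
    split_ifs with hk'
    · linear_combination hbalance (k + 1) hk' - hbalance k hk
    · linear_combination -hbalance k hk

end BirthDeath

theorem sum_eq_one_and_stationary_of_eq_div_sum {B : ℕ} {P : ℕ → ℕ → ℝ} {a p : ℕ → ℝ}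
    (hstat : ∀ j ≤ B, ∑ i ∈ range (B + 1), a i * P i j = a j)
    (hsum : ∑ j ∈ range (B + 1), a j ≠ 0)
    (hp : ∀ i ≤ B, p i = a i / ∑ j ∈ range (B + 1), a j) :
    (∑ i ∈ range (B + 1), p i = 1) ∧
      ∀ j ≤ B, ∑ i ∈ range (B + 1), p i * P i j = p j := by
  have hp' : ∀ i ∈ range (B + 1), p i = a i / ∑ j ∈ range (B + 1), a j :=
    fun i hi => hp i (mem_range_succ_iff.mp hi)
  refine ⟨?_, fun j hj => ?_⟩
  · rw [sum_congr rfl hp', ← sum_div, div_self hsum]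
  · rw [sum_congr rfl fun i hi => by rw [hp' i hi, div_mul_eq_mul_div], ← sum_div,
      hstat j hj, hp j hj]

theorem choose_mul_pow_detailed_balance (m i : ℕ) (β ρ p : ℝ) :
    ((m + 1).choose (i + 1) : ℝ) * β ^ (i + 1) * ρ ^ (i + 1) *
        (((i + 1 : ℕ) : ℝ) / ((m + 1 : ℕ) : ℝ) * p) =
      (m.choose i : ℝ) * β ^ i * ρ ^ i * (ρ * (β * p)) := by
  have hchoose : ((m + 1).choose (i + 1) : ℝ) * ((i + 1 : ℕ) : ℝ) =
      ((m + 1 : ℕ) : ℝ) * (m.choose i : ℝ) := by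
    exact_mod_cast (Nat.add_one_mul_choose_eq m i).symm
  have hm : ((m + 1 : ℕ) : ℝ) ≠ 0 := by positivity
  field_simp
  linear_combination (β ^ (i + 1) * ρ ^ (i + 1) * p) * hchoose

theorem stmt3_general (n B : ℕ)
    (p_sr p_rd ρ β : ℝ) (hsr : 0 ≤ p_sr) (hrd : 0 < p_rd)
    (hρ0 : 0 ≤ ρ)
    (hβ : β = p_sr / p_rd)
    (P : ℕ → ℕ → ℝ)
    (hPup : ∀ i < B, P i (i + 1) = ρ * p_sr)
    (hPdown : ∀ i, 1 ≤ i → i ≤ B →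
      P i (i - 1) = (i : ℝ) / ((n - 3 + i : ℕ) : ℝ) * p_rd)
    (hPdiag : ∀ i ≤ B, P i i =
      1 - (if i < B then ρ * p_sr else 0)
        - (if 1 ≤ i then (i : ℝ) / ((n - 3 + i : ℕ) : ℝ) * p_rd else 0))
    (hPzero : ∀ i ≤ B, ∀ j ≤ B, i + 2 ≤ j ∨ j + 2 ≤ i → P i j = 0)
    (piv : ℕ → ℝ)
    (hpiv : ∀ i ≤ B, piv i = ((n - 3 + i).choose i : ℝ) * β ^ i * ρ ^ i
        / ∑ j ∈ Finset.range (B + 1), ((n - 3 + j).choose j : ℝ) * β ^ j * ρ ^ j) :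
    (∑ i ∈ Finset.range (B + 1), piv i = 1) ∧
    ∀ j ≤ B, ∑ i ∈ Finset.range (B + 1), piv i * P i j = piv j := by
  set a : ℕ → ℝ := fun i => ((n - 3 + i).choose i : ℝ) * β ^ i * ρ ^ i
  have hβ0 : 0 ≤ β := hβ ▸ div_nonneg hsr hrd.le
  have hp_sr : p_sr = β * p_rd := by rw [hβ, div_mul_cancel₀ _ hrd.ne']
  have hsum_pos : 0 < ∑ j ∈ range (B + 1), a j :=
    calc (0 : ℝ) < a 0 := by simp [a]
      _ ≤ _ := single_le_sum (fun i _ => by positivity) (mem_range.mpr B.succ_pos)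
  have hbalance : ∀ i < B, a (i + 1) * (((i + 1 : ℕ) : ℝ) / ((n - 3 + (i + 1) : ℕ) : ℝ) * p_rd)
      = a i * (ρ * p_sr) := fun i _ => by
    rw [hp_sr]
    exact choose_mul_pow_detailed_balance (n - 3 + i) i β ρ p_rd
  exact sum_eq_one_and_stationary_of_eq_div_sum
    (fun j hj => sum_mul_birthDeath_eq_of_detailed_balance
      (up := fun _ => ρ * p_sr) (down := fun i => (i : ℝ) / ((n - 3 + i : ℕ) : ℝ) * p_rd)
      hPup hPdown hPdiag hPzero hbalance hj)
    hsum_pos.ne' hpiv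

/-- Lemma 2: the limiting (stationary) distribution of the embedded Markov chain. -/
theorem stmt3 (n B : ℕ) (hn : 3 ≤ n) (hB : 1 ≤ B)
    (p_sr p_rd ρ β : ℝ) (hsr : 0 ≤ p_sr) (hrd : 0 < p_rd)
    (hρ0 : 0 ≤ ρ) (hρ1 : ρ ≤ 1) (hstoch : ρ * p_sr + p_rd ≤ 1)
    (hβ : β = p_sr / p_rd)
    (P : ℕ → ℕ → ℝ)
    (hPup : ∀ i < B, P i (i + 1) = ρ * p_sr)
    (hPdown : ∀ i, 1 ≤ i → i ≤ B →
      P i (i - 1) = (i : ℝ) / ((n - 3 + i : ℕ) : ℝ) * p_rd)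
    (hPdiag : ∀ i ≤ B, P i i =
      1 - (if i < B then ρ * p_sr else 0)
        - (if 1 ≤ i then (i : ℝ) / ((n - 3 + i : ℕ) : ℝ) * p_rd else 0))
    (hPzero : ∀ i ≤ B, ∀ j ≤ B, i + 2 ≤ j ∨ j + 2 ≤ i → P i j = 0)
    (piv : ℕ → ℝ)
    (hpiv : ∀ i ≤ B, piv i = ((n - 3 + i).choose i : ℝ) * β ^ i * ρ ^ i
        / ∑ j ∈ Finset.range (B + 1), ((n - 3 + j).choose j : ℝ) * β ^ j * ρ ^ j) :
    (∑ i ∈ Finset.range (B + 1), piv i = 1) ∧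
    ∀ j ≤ B, ∑ i ∈ Finset.range (B + 1), piv i * P i j = piv j :=
  stmt3_general n B p_sr p_rd ρ β hsr hrd hρ0 hβ P hPup hPdown hPdiag hPzero piv hpiv
end

section
/- Let n ≥ 3 and B ≥ 1 be integers, let p_sd > 0, p_sr ≥ 0, β > 0 and λ > 0 be real numbers, and set C_i = C(n−3+i, i). For x ∈ [0,1] define ρ(x) = λ / (p_sd + p_sr·(1 − x)) and F(x) = C_B·β^B·ρ(x)^B / (∑_{i=0}^{B} C_i·β^i·ρ(x)^i). Then there exists x ∈ [0,1) with F(x) = x. -/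
/-- Solvability of the fixed-point equation for the relay-buffer blocking probability. -/
theorem stmt4 (n B : ℕ) (hn : 3 ≤ n) (hB : 1 ≤ B)
    (p_sd p_sr β lam : ℝ) (hsd : 0 < p_sd) (hsr : 0 ≤ p_sr) (hβ : 0 < β)
    (hlam : 0 < lam)
    (ρ F : ℝ → ℝ)
    (hρ : ∀ x ∈ Set.Icc (0 : ℝ) 1, ρ x = lam / (p_sd + p_sr * (1 - x)))
    (hF : ∀ x ∈ Set.Icc (0 : ℝ) 1,
      F x = ((n - 3 + B).choose B : ℝ) * β ^ B * ρ x ^ B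
        / ∑ i ∈ Finset.range (B + 1), ((n - 3 + i).choose i : ℝ) * β ^ i * ρ x ^ i) :
    ∃ x ∈ Set.Ico (0 : ℝ) 1, F x = x := by
  set I : Set ℝ := Set.Icc (0:ℝ) 1 with hI
  set d : ℝ → ℝ := fun x => p_sd + p_sr * (1 - x) with hd
  have hdpos : ∀ x ∈ I, 0 < d x := by
    intro x hx
    have h1 : 0 ≤ p_sr * (1 - x) := mul_nonneg hsr (by linarith [hx.2])
    simp only [hd]; nlinarith
  set r : ℝ → ℝ := fun x => lam / d x with hr
  have hrpos : ∀ x ∈ I, 0 ≤ r x := fun x hx => div_nonneg hlam.le (hdpos x hx).le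
  set num : ℝ → ℝ := fun x => ((n - 3 + B).choose B : ℝ) * β ^ B * r x ^ B with hnum
  set S : ℝ → ℝ := fun x =>
    ∑ i ∈ Finset.range (B + 1), ((n - 3 + i).choose i : ℝ) * β ^ i * r x ^ i with hS
  have hnumnn : ∀ x ∈ I, 0 ≤ num x := by
    intro x hx
    exact mul_nonneg (mul_nonneg (Nat.cast_nonneg _) (pow_nonneg hβ.le _))
      (pow_nonneg (hrpos x hx) _)
  have hkey : ∀ x ∈ I, num x + 1 ≤ S x := by
    intro x hx
    have hsub : ({0, B} : Finset ℕ) ⊆ Finset.range (B + 1) := by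
      intro i hi
      simp only [Finset.mem_insert, Finset.mem_singleton] at hi
      rcases hi with rfl | rfl <;> simp [Finset.mem_range] <;> omega
    have hle : ∑ i ∈ ({0, B} : Finset ℕ), ((n - 3 + i).choose i : ℝ) * β ^ i * r x ^ i
        ≤ S x := by
      apply Finset.sum_le_sum_of_subset_of_nonneg hsub
      intro i _ _
      exact mul_nonneg (mul_nonneg (Nat.cast_nonneg _) (pow_nonneg hβ.le _))
        (pow_nonneg (hrpos x hx) _)
    rw [Finset.sum_pair (by omega : (0:ℕ) ≠ B)] at hle
    simp only [pow_zero, Nat.choose_zero_right, Nat.cast_one, mul_one, one_mul] at hle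
    simp only [hnum]
    linarith [hle]
  have hSpos : ∀ x ∈ I, 0 < S x := by
    intro x hx
    have := hkey x hx
    have := hnumnn x hx
    linarith
  -- F matches num/S on I, and 0 ≤ F x, F x < 1
  have hFeq : ∀ x ∈ I, F x = num x / S x := by
    intro x hx
    rw [hF x hx, hρ x hx]
  have hFlt : ∀ x ∈ I, F x < 1 := by
    intro x hx
    rw [hFeq x hx]
    rw [div_lt_one (hSpos x hx)]
    linarith [hkey x hx]
  have hFnn : ∀ x ∈ I, 0 ≤ F x := by
    intro x hx
    rw [hFeq x hx]
    exact div_nonneg (hnumnn x hx) (hSpos x hx).le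
  -- continuity
  have hcr : ContinuousOn r I := by
    apply ContinuousOn.div continuousOn_const
    · fun_prop
    · exact fun x hx => (hdpos x hx).ne'
  have hcnum : ContinuousOn num I := by
    apply ContinuousOn.mul continuousOn_const
    exact hcr.pow B
  have hcS : ContinuousOn S I := by
    apply continuousOn_finset_sum
    intro i _
    exact ContinuousOn.mul continuousOn_const (hcr.pow i)
  have hcF : ContinuousOn F I := by
    exact (hcnum.div hcS (fun x hx => (hSpos x hx).ne')).congr hFeq
  set g : ℝ → ℝ := fun x => x - F x with hg
  have hcg : ContinuousOn g I := (continuousOn_id).sub hcF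
  have h0 : (0:ℝ) ∈ I := by constructor <;> norm_num
  have h1 : (1:ℝ) ∈ I := by constructor <;> norm_num
  have hiv := intermediate_value_Icc (by norm_num : (0:ℝ) ≤ 1) hcg
  have h0mem : (0:ℝ) ∈ Set.Icc (g 0) (g 1) := by
    constructor
    · simp only [hg]; have := hFnn 0 h0; linarith
    · simp only [hg]; have := hFlt 1 h1; linarith
  obtain ⟨c, hc, hgc⟩ := hiv h0mem
  have hfc : F c = c := by
    have h2 := hgc
    simp only [hg, sub_eq_zero] at h2
    exact h2.symm
  refine ⟨c, ⟨hc.1, ?_⟩, hfc⟩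
  have := hFlt c hc
  linarith
end

section
/- Let n ≥ 3 be an integer, β > 0 a real number, and set C_i = C(n−3+i, i). Define s_B = C_B·β^B / (∑_{i=0}^{B} C_i·β^i) for every integer B ≥ 0. Then s_{B+1} < s_B for every B ≥ 0. Consequently, for any reals p_sd ≥ 0 and p_sr > 0, the quantity T_c(B) = p_sd + p_sr·(1 − s_B) is strictly increasing in B. -/
/-!
The terms `t i = C(m+i, i) β^i` have ratio `t (i+1) / t i = β (m+i+1)/(i+1)`, which is
antitone in `i`. Hence `t (B+1) t i ≤ t B t (i+1)` for every `i ≤ B`; summing over `i ≤ B`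
gives `t (B+1) S_B ≤ t B (S_{B+1} - t 0) < t B S_{B+1}`, where `S_B = ∑_{i ≤ B} t i`.
-/

open Finset

theorem strictAnti_div_sum_range_of_antitone_ratio {t : ℕ → ℝ} (ht : ∀ i, 0 < t i)
    (hratio : Antitone fun i => t (i + 1) / t i) :
    StrictAnti fun B => t B / ∑ i ∈ range (B + 1), t i := by
  refine strictAnti_nat_of_succ_lt fun B => ?_
  have hsum_pos : ∀ k, 0 < ∑ i ∈ range (k + 1), t i :=
    fun k => sum_pos (fun i _ => ht i) nonempty_range_add_one
  have hcross : ∀ i ∈ range (B + 1), t (B + 1) * t i ≤ t B * t (i + 1) := by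
    intro i hi
    have hle := hratio (Nat.lt_succ_iff.mp (mem_range.mp hi))
    rw [div_le_div_iff₀ (ht B) (ht i)] at hle
    linarith
  rw [div_lt_div_iff₀ (hsum_pos (B + 1)) (hsum_pos B)]
  calc t (B + 1) * ∑ i ∈ range (B + 1), t i
      = ∑ i ∈ range (B + 1), t (B + 1) * t i := mul_sum _ _ _
    _ ≤ ∑ i ∈ range (B + 1), t B * t (i + 1) := sum_le_sum hcross
    _ < ∑ i ∈ range (B + 1), t B * t (i + 1) + t B * t 0 := by
        linarith [mul_pos (ht B) (ht 0)]
    _ = t B * ∑ i ∈ range (B + 1 + 1), t i := by rw [sum_range_succ' _ (B + 1), mul_add, mul_sum]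

theorem Nat.choose_succ_div_choose_add (m i : ℕ) :
    ((m + (i + 1)).choose (i + 1) : ℝ) / (m + i).choose i = (m + i + 1) / (i + 1) := by
  have hpos : (0 : ℝ) < (m + i).choose i := by exact_mod_cast Nat.choose_pos (by omega)
  have h := Nat.add_one_mul_choose_eq (m + i) i
  rw [div_eq_div_iff hpos.ne' (by positivity), ← add_assoc]
  exact_mod_cast h.symm

theorem antitone_add_succ_div_succ (m : ℕ) :
    Antitone fun i : ℕ => ((m : ℝ) + i + 1) / (i + 1) := by
  have hsplit : ∀ i : ℕ, ((m : ℝ) + i + 1) / (i + 1) = 1 + m / (i + 1) := fun i => by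
    field_simp; ring
  intro i j hij
  simp only [hsplit]
  gcongr

theorem antitone_choose_mul_pow_ratio (m : ℕ) {β : ℝ} (hβ : 0 < β) :
    Antitone fun i : ℕ =>
      ((m + (i + 1)).choose (i + 1) * β ^ (i + 1) : ℝ) / ((m + i).choose i * β ^ i) := by
  have hformula : ∀ i : ℕ,
      ((m + (i + 1)).choose (i + 1) * β ^ (i + 1) : ℝ) / ((m + i).choose i * β ^ i) =
        β * (((m : ℝ) + i + 1) / (i + 1)) := fun i => by
    have hchoose : ((m + i).choose i : ℝ) ≠ 0 := by
      exact_mod_cast (Nat.choose_pos (Nat.le_add_left i m)).ne'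
    rw [← Nat.choose_succ_div_choose_add m i, pow_succ]
    field_simp
  simp only [hformula]
  exact (antitone_add_succ_div_succ m).const_mul hβ.le

theorem stmt5_general (n : ℕ) (β : ℝ) (hβ : 0 < β)
    (s : ℕ → ℝ)
    (hs : ∀ B, s B = ((n - 3 + B).choose B : ℝ) * β ^ B
        / ∑ i ∈ Finset.range (B + 1), ((n - 3 + i).choose i : ℝ) * β ^ i) :
    (∀ B, s (B + 1) < s B) ∧
    ∀ p_sd p_sr : ℝ, 0 ≤ p_sd → 0 < p_sr →
      StrictMono (fun B : ℕ => p_sd + p_sr * (1 - s B)) := by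
  have ht_pos : ∀ i, 0 < ((n - 3 + i).choose i : ℝ) * β ^ i := fun i =>
    mul_pos (by exact_mod_cast Nat.choose_pos (Nat.le_add_left i _)) (pow_pos hβ i)
  have hanti : StrictAnti s := by
    rw [funext hs]
    exact strictAnti_div_sum_range_of_antitone_ratio ht_pos
      (antitone_choose_mul_pow_ratio (n - 3) hβ)
  refine ⟨fun B => hanti (Nat.lt_succ_self B), fun p_sd p_sr _ hp_sr a b hab => ?_⟩
  have hs_lt : s b < s a := hanti hab
  dsimp only
  gcongr

/-- Corollary 1: the blocking term strictly decreases, hence the throughput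
capacity strictly increases, with the relay-buffer size. -/
theorem stmt5 (n : ℕ) (hn : 3 ≤ n) (β : ℝ) (hβ : 0 < β)
    (s : ℕ → ℝ)
    (hs : ∀ B, s B = ((n - 3 + B).choose B : ℝ) * β ^ B
        / ∑ i ∈ Finset.range (B + 1), ((n - 3 + i).choose i : ℝ) * β ^ i) :
    (∀ B, s (B + 1) < s B) ∧
    ∀ p_sd p_sr : ℝ, 0 ≤ p_sd → 0 < p_sr →
      StrictMono (fun B : ℕ => p_sd + p_sr * (1 - s B)) :=
  stmt5_general n β hβ s hs
end

section
/- Let n ≥ 3 be an integer and let 0 < β ≤ 1 be a real number, with C_i = C(n−3+i, i). Then the sequence B ↦ C_B·β^B / (∑_{i=0}^{B} C_i·β^i) tends to 0 as B → ∞. -/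
open Finset Filter

lemma hockey (m B : ℕ) :
    ∑ i ∈ Finset.range (B + 1), (m + i).choose i = (B + m + 1).choose (m + 1) := by
  rw [← Nat.sum_range_add_choose B m]
  refine Finset.sum_congr rfl fun i _ => ?_
  have h := Nat.choose_symm (Nat.le_add_right m i)
  simpa [Nat.add_sub_cancel_left, Nat.add_comm] using h

/-- Corollary 3, case β ≤ 1: the blocking term vanishes as B → ∞. -/
theorem stmt7 (n : ℕ) (hn : 3 ≤ n) (β : ℝ) (hβ0 : 0 < β) (hβ1 : β ≤ 1) :
    Filter.Tendsto (fun B : ℕ => ((n - 3 + B).choose B : ℝ) * β ^ B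
        / ∑ i ∈ Finset.range (B + 1), ((n - 3 + i).choose i : ℝ) * β ^ i)
      Filter.atTop (nhds 0) := by
  set m := n - 3 with hm
  have hpos : ∀ B : ℕ, (0:ℝ) < ∑ i ∈ Finset.range (B + 1), ((m + i).choose i : ℝ) * β ^ i := by
    intro B
    apply Finset.sum_pos
    · intro i _
      have : 0 < (m + i).choose i := Nat.choose_pos (Nat.le_add_left i m)
      positivity
    · exact ⟨0, Finset.mem_range.mpr (Nat.succ_pos B)⟩
  -- lower bound on denominator
  have hlb : ∀ B : ℕ, β ^ B * ((B + m + 1).choose (m + 1) : ℝ)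
      ≤ ∑ i ∈ Finset.range (B + 1), ((m + i).choose i : ℝ) * β ^ i := by
    intro B
    have : β ^ B * ((B + m + 1).choose (m + 1) : ℝ)
        = ∑ i ∈ Finset.range (B + 1), ((m + i).choose i : ℝ) * β ^ B := by
      rw [← Finset.sum_mul, mul_comm]
      norm_cast
      rw [hockey]
    rw [this]
    apply Finset.sum_le_sum
    intro i hi
    have hiB : i ≤ B := Nat.lt_succ_iff.mp (Finset.mem_range.mp hi)
    have : β ^ B ≤ β ^ i := pow_le_pow_of_le_one hβ0.le hβ1 hiB
    have hc : (0:ℝ) ≤ ((m + i).choose i : ℝ) := Nat.cast_nonneg _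
    exact mul_le_mul_of_nonneg_left this hc
  -- upper bound on the ratio
  have hub : ∀ B : ℕ, ((m + B).choose B : ℝ) * β ^ B
      / ∑ i ∈ Finset.range (B + 1), ((m + i).choose i : ℝ) * β ^ i
      ≤ (m + 1 : ℝ) / (B + m + 1) := by
    intro B
    have hβB : (0:ℝ) < β ^ B := pow_pos hβ0 B
    have hT : (0:ℝ) < ((B + m + 1).choose (m + 1) : ℝ) := by
      exact_mod_cast Nat.choose_pos (by omega)
    have h1 : ((m + B).choose B : ℝ) * β ^ B
        / ∑ i ∈ Finset.range (B + 1), ((m + i).choose i : ℝ) * β ^ i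
        ≤ ((m + B).choose B : ℝ) * β ^ B / (β ^ B * ((B + m + 1).choose (m + 1) : ℝ)) := by
      apply div_le_div_of_nonneg_left _ (by positivity) (hlb B)
      positivity
    have h2 : ((m + B).choose B : ℝ) * β ^ B / (β ^ B * ((B + m + 1).choose (m + 1) : ℝ))
        = ((m + B).choose B : ℝ) / ((B + m + 1).choose (m + 1) : ℝ) := by
      field_simp
    rw [h2] at h1
    refine h1.trans ?_
    -- (m+B).choose B / (B+m+1).choose (m+1) = (m+1)/(B+m+1)
    have key : ((m + B).choose B : ℝ) * (B + m + 1) = ((B + m + 1).choose (m + 1) : ℝ) * (m + 1) := by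
      have hsymm : (m + B).choose B = (m + B).choose m := by
        have h := Nat.choose_symm (Nat.le_add_right m B)
        simpa [Nat.add_sub_cancel_left] using h
      have := Nat.add_one_mul_choose_eq (m + B) m
      -- (m+B+1) * (m+B).choose m = (m+B+1).choose (m+1) * (m+1)
      have hn' : (m + B + 1) * (m + B).choose m = (m + B + 1).choose (m + 1) * (m + 1) := by
        simpa [Nat.succ_eq_add_one] using this
      have knat : (m + B).choose B * (B + m + 1) = (B + m + 1).choose (m + 1) * (m + 1) := by
        rw [hsymm, show B + m + 1 = m + B + 1 from by omega, mul_comm]; exact hn'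
      exact_mod_cast knat
    have hBm : (0:ℝ) < (B + m + 1 : ℝ) := by positivity
    rw [div_le_div_iff₀ hT hBm, mul_comm ((m:ℝ)+1)]
    exact le_of_eq key
  have hnn : ∀ B : ℕ, (0:ℝ) ≤ ((m + B).choose B : ℝ) * β ^ B
      / ∑ i ∈ Finset.range (B + 1), ((m + i).choose i : ℝ) * β ^ i := by
    intro B
    apply div_nonneg _ (hpos B).le
    positivity
  have hlim : Filter.Tendsto (fun B : ℕ => (m + 1 : ℝ) / (B + m + 1)) atTop (nhds 0) := by
    apply Filter.Tendsto.div_atTop tendsto_const_nhds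
    apply Filter.tendsto_atTop_add_const_right
    exact Filter.tendsto_atTop_add_const_right _ _ tendsto_natCast_atTop_atTop
  exact squeeze_zero hnn hub hlim
end

section
/- Let n ≥ 3 be an integer and let β > 1 be a real number, with C_i = C(n−3+i, i). Then the sequence B ↦ 1 − C_B·β^B / (∑_{i=0}^{B} C_i·β^i) tends to 1/β as B → ∞. -/
open Filter Finset

namespace Stmt8Aux

noncomputable def c (m i : ℕ) : ℝ := ((m + i).choose i : ℝ)

lemma c_pos (m i : ℕ) : 0 < c m i := by
  unfold c
  have : 0 < (m + i).choose i := Nat.choose_pos (by omega)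
  exact_mod_cast this

lemma c_mono (m : ℕ) {i j : ℕ} (h : i ≤ j) : c m i ≤ c m j := by
  have h1 : (m + i).choose i = (m + i).choose m := by
    have := Nat.choose_symm (n := m + i) (k := m) (by omega)
    simpa [Nat.add_sub_cancel_left] using this
  have h2 : (m + j).choose j = (m + j).choose m := by
    have := Nat.choose_symm (n := m + j) (k := m) (by omega)
    simpa [Nat.add_sub_cancel_left] using this
  have : (m + i).choose m ≤ (m + j).choose m := Nat.choose_le_choose m (by omega)
  unfold c
  rw [h1, h2]
  exact_mod_cast this

lemma c_succ (m B : ℕ) : ((B : ℝ) + 1) * c m (B + 1) = ((m : ℝ) + B + 1) * c m B := by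
  have h : (m + B + 1) * (m + B).choose B = (m + B + 1).choose (B + 1) * (B + 1) := by
    simpa [Nat.succ_eq_add_one] using Nat.add_one_mul_choose_eq (m + B) B
  unfold c
  rw [show m + (B + 1) = m + B + 1 from by omega]
  have := congrArg (fun x : ℕ => (x : ℝ)) h
  push_cast at this ⊢
  linarith [this]

lemma ratio_one (m : ℕ) : ∀ k : ℕ, Tendsto (fun B : ℕ => c m B / c m (B + k)) atTop (nhds 1) := by
  intro k
  induction k with
  | zero => simpa using tendsto_const_nhds.congr (fun B : ℕ => by
      rw [div_self (c_pos m B).ne'])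
  | succ k ih =>
      have hstep : Tendsto (fun B : ℕ => c m (B + k) / c m (B + k + 1)) atTop (nhds 1) := by
        have heq : ∀ B : ℕ, c m (B + k) / c m (B + k + 1)
            = ((B : ℝ) + k + 1) / ((m : ℝ) + B + k + 1) := by
          intro B
          have h := c_succ m (B + k)
          push_cast at h
          have h1 := (c_pos m (B + k + 1)).ne'
          have h2 : ((m : ℝ) + B + k + 1) ≠ 0 := by positivity
          field_simp
          nlinarith [h]
        rw [tendsto_congr heq]
        have htend : Tendsto (fun B : ℕ => 1 - (m : ℝ) / ((m : ℝ) + B + k + 1)) atTop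
            (nhds (1 - 0)) := by
          apply Tendsto.const_sub
          apply Tendsto.div_atTop tendsto_const_nhds
          apply tendsto_atTop_add_const_right
          apply tendsto_atTop_add_const_right
          apply tendsto_atTop_add_const_left
          exact tendsto_natCast_atTop_atTop
        simp only [sub_zero] at htend
        apply htend.congr
        intro B
        have h2 : ((m : ℝ) + B + k + 1) ≠ 0 := by positivity
        field_simp
        ring
      have := ih.mul hstep
      rw [mul_one] at this
      apply this.congr
      intro B
      have h1 := (c_pos m (B + k)).ne'
      have h2 := (c_pos m (B + k + 1)).ne'
      rw [show B + (k + 1) = B + k + 1 from rfl]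
      field_simp

end Stmt8Aux

open Stmt8Aux in
/-- Corollary 3, case β > 1: the non-blocking factor tends to 1/β as B → ∞. -/
theorem stmt8 (n : ℕ) (hn : 3 ≤ n) (β : ℝ) (hβ : 1 < β) :
    Filter.Tendsto (fun B : ℕ => 1 - ((n - 3 + B).choose B : ℝ) * β ^ B
        / ∑ i ∈ Finset.range (B + 1), ((n - 3 + i).choose i : ℝ) * β ^ i)
      Filter.atTop (nhds (1 / β)) := by
  set m := n - 3 with hm
  have hβ0 : (0 : ℝ) < β := by linarith
  have hr0 : (0 : ℝ) ≤ 1 / β := by positivity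
  have hr1 : 1 / β < 1 := by
    rw [div_lt_one hβ0]; linarith
  -- terms and normalized partial sums
  set a : ℕ → ℝ := fun i => c m i * β ^ i with ha
  have ha_pos : ∀ i, 0 < a i := fun i => mul_pos (c_pos m i) (pow_pos hβ0 i)
  set S : ℕ → ℝ := fun B => ∑ i ∈ Finset.range (B + 1), a i with hS
  have hS_pos : ∀ B, 0 < S B := fun B =>
    Finset.sum_pos (fun i _ => ha_pos i) ⟨0, Finset.mem_range.2 (Nat.succ_pos B)⟩
  set f : ℕ → ℕ → ℝ := fun B k => if k ≤ B then a (B - k) / a B else 0 with hf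
  -- tsum of f B equals S B / a B
  have htsum : ∀ B, ∑' k, f B k = S B / a B := by
    intro B
    have hsupp : ∀ k ∉ Finset.range (B + 1), f B k = 0 := by
      intro k hk
      simp only [Finset.mem_range] at hk
      simp only [hf]
      rw [if_neg (by omega : ¬ k ≤ B)]
    rw [tsum_eq_sum hsupp]
    have : ∀ k ∈ Finset.range (B + 1), f B k = a (B - k) / a B := by
      intro k hk
      simp only [Finset.mem_range] at hk
      simp only [hf, if_pos (by omega : k ≤ B)]
    rw [Finset.sum_congr rfl this]
    rw [← Finset.sum_div]
    congr 1
    have := Finset.sum_range_reflect (fun j => a j) (B + 1)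
    simp only [hS]
    simpa using this
  -- domination
  have hbound : ∀ B k, ‖f B k‖ ≤ (1 / β) ^ k := by
    intro B k
    by_cases hk : k ≤ B
    · have hfk : f B k = a (B - k) / a B := by simp [hf, hk]
      rw [hfk, Real.norm_eq_abs, abs_of_nonneg (le_of_lt (div_pos (ha_pos _) (ha_pos _)))]
      rw [div_le_iff₀ (ha_pos B)]
      have hpow : (1 / β) ^ k * a B = c m B * β ^ (B - k) := by
        have : β ^ B = β ^ (B - k) * β ^ k := by
          rw [← pow_add]; congr 1; omega
        simp only [ha, this, div_pow, one_pow]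
        field_simp
      rw [hpow]
      exact mul_le_mul_of_nonneg_right (c_mono m (by omega)) (le_of_lt (pow_pos hβ0 _))
    · simp only [hf, if_neg hk, norm_zero]
      positivity
  -- pointwise limits
  have hpt : ∀ k : ℕ, Tendsto (fun B => f B k) atTop (nhds ((1 / β) ^ k)) := by
    intro k
    have hcomp : Tendsto (fun B : ℕ => c m (B - k) / c m B) atTop (nhds 1) := by
      have h1 : Tendsto (fun B : ℕ => B - k) atTop atTop :=
        tendsto_sub_atTop_nat k
      have h2 := (ratio_one m k).comp h1
      apply h2.congr'
      filter_upwards [eventually_ge_atTop k] with B hB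
      simp only [Function.comp]
      congr 2
      omega
    have := hcomp.mul (tendsto_const_nhds (x := (1 / β) ^ k) (f := atTop))
    rw [one_mul] at this
    apply this.congr'
    filter_upwards [eventually_ge_atTop k] with B hB
    have hfk : f B k = a (B - k) / a B := by simp [hf, hB]
    rw [hfk]
    have hpow : β ^ B = β ^ (B - k) * β ^ k := by
      rw [← pow_add]; congr 1; omega
    simp only [ha, hpow, div_pow, one_pow]
    have h1 := (c_pos m B).ne'
    have h2 : β ^ k ≠ 0 := by positivity
    have h3 : β ^ (B - k) ≠ 0 := by positivity
    field_simp
  -- apply dominated convergence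
  have hsum : Summable (fun k : ℕ => (1 / β) ^ k) := summable_geometric_of_lt_one hr0 hr1
  have hmain : Tendsto (fun B => ∑' k, f B k) atTop (nhds (∑' k, (1 / β) ^ k)) :=
    tendsto_tsum_of_dominated_convergence hsum hpt (Filter.Eventually.of_forall hbound)
  rw [tsum_geometric_of_lt_one hr0 hr1] at hmain
  simp only [htsum] at hmain
  -- invert
  have hne : ((1 : ℝ) - 1 / β)⁻¹ ≠ 0 := by
    apply inv_ne_zero
    have : 1 / β < 1 := hr1
    linarith
  have hinv := hmain.inv₀ hne
  rw [inv_inv] at hinv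
  have hinv' : Tendsto (fun B => a B / S B) atTop (nhds (1 - 1 / β)) := by
    apply hinv.congr
    intro B
    rw [inv_div]
  have hfinal := hinv'.const_sub 1
  rw [sub_sub_cancel] at hfinal
  exact hfinal
end

section
/- Let n ≥ 4 and B ≥ 1 be integers, set C_i = C(n−3+i, i), h(γ) = ∑_{i=0}^{B−1} C_i·γ^{B−i}, and h'(γ) = ∑_{i=0}^{B−1} (B−i)·C_i·γ^{B−i−1}. Then for every real γ with 0 < γ ≤ 1, h(γ)·(h(γ) + C_B) < (1+γ)·C_B·h'(γ). -/
noncomputable def Cc (n B : ℕ) : ℝ := ((n - 3 + B).choose B : ℝ)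

noncomputable def Hf (n B : ℕ) (γ : ℝ) : ℝ :=
  ∑ i ∈ Finset.range B, ((n - 3 + i).choose i : ℝ) * γ ^ (B - i)

noncomputable def Hd (n B : ℕ) (γ : ℝ) : ℝ :=
  ∑ i ∈ Finset.range B, ((B - i : ℕ) : ℝ) * ((n - 3 + i).choose i : ℝ) * γ ^ (B - i - 1)

lemma Cc_pos (n B : ℕ) : 0 < Cc n B := by
  unfold Cc
  exact_mod_cast Nat.choose_pos (Nat.le_add_left B (n - 3))

lemma Cc_mono (n B : ℕ) : Cc n B ≤ Cc n (B + 1) := by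
  unfold Cc
  have h1 : n - 3 + (B + 1) = (n - 3 + B) + 1 := by omega
  rw [h1, Nat.choose_succ_succ]
  push_cast
  have : (0:ℝ) ≤ ((n - 3 + B).choose (B + 1) : ℝ) := by positivity
  linarith

lemma Hf_succ (n B : ℕ) (γ : ℝ) : Hf n (B + 1) γ = γ * (Hf n B γ + Cc n B) := by
  unfold Hf Cc
  rw [Finset.sum_range_succ]
  have h1 : B + 1 - B = 1 := by omega
  rw [h1, mul_add, Finset.mul_sum]
  congr 1
  · apply Finset.sum_congr rfl
    intro i hi
    have hiB := Finset.mem_range.mp hi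
    have h2 : B + 1 - i = (B - i) + 1 := by omega
    rw [h2, pow_succ]
    ring
  · rw [pow_one]; ring

lemma Hd_succ (n B : ℕ) (γ : ℝ) :
    Hd n (B + 1) γ = Hf n B γ + Cc n B + γ * Hd n B γ := by
  unfold Hd Hf Cc
  rw [Finset.sum_range_succ]
  have h1 : B + 1 - B = 1 := by omega
  rw [h1]
  have key : ∀ i ∈ Finset.range B,
      ((B + 1 - i : ℕ) : ℝ) * ((n - 3 + i).choose i : ℝ) * γ ^ (B + 1 - i - 1)
        = ((n - 3 + i).choose i : ℝ) * γ ^ (B - i)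
          + γ * (((B - i : ℕ) : ℝ) * ((n - 3 + i).choose i : ℝ) * γ ^ (B - i - 1)) := by
    intro i hi
    have hiB := Finset.mem_range.mp hi
    have e1 : (B + 1 - i : ℕ) = (B - i) + 1 := by omega
    have e2 : B + 1 - i - 1 = B - i := by omega
    have e3 : γ ^ (B - i) = γ ^ (B - i - 1) * γ := by
      rw [← pow_succ]
      congr 1
      omega
    rw [e2, e1, e3]
    push_cast
    ring
  rw [Finset.sum_congr rfl key, Finset.sum_add_distrib, ← Finset.mul_sum]
  simp
  ring

lemma Hf_pos (n B : ℕ) (hB : 1 ≤ B) {γ : ℝ} (hγ : 0 < γ) : 0 < Hf n B γ := by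
  unfold Hf
  apply Finset.sum_pos
  · intro i _
    have hc : 0 < ((n - 3 + i).choose i : ℝ) := by
      exact_mod_cast Nat.choose_pos (Nat.le_add_left i (n - 3))
    positivity
  · exact Finset.nonempty_range_iff.mpr (by omega)

lemma Hd_pos (n B : ℕ) (hB : 1 ≤ B) {γ : ℝ} (hγ : 0 < γ) : 0 < Hd n B γ := by
  unfold Hd
  apply Finset.sum_pos
  · intro i hi
    have hiB := Finset.mem_range.mp hi
    have hc : 0 < ((n - 3 + i).choose i : ℝ) := by
      exact_mod_cast Nat.choose_pos (Nat.le_add_left i (n - 3))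
    have hbi : 0 < ((B - i : ℕ) : ℝ) := by
      have : 0 < B - i := by omega
      exact_mod_cast this
    positivity
  · exact Finset.nonempty_range_iff.mpr (by omega)

lemma key_ineq (n : ℕ) (hn : 4 ≤ n) :
    ∀ B, 1 ≤ B → ∀ γ : ℝ, 0 < γ → γ ≤ 1 →
      Hf n B γ * (Hf n B γ + Cc n B) < (1 + γ) * Cc n B * Hd n B γ := by
  intro B
  induction B with
  | zero => intro h; omega
  | succ b ih =>
    intro _ γ hγ hγ1
    by_cases hb : b = 0
    · subst hb
      have hHf : Hf n 1 γ = γ := by unfold Hf; simp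
      have hHd : Hd n 1 γ = 1 := by unfold Hd; simp
      have hC : (2 : ℝ) ≤ Cc n 1 := by
        unfold Cc
        have e : n - 3 + 1 = n - 2 := by omega
        rw [e, Nat.choose_one_right]
        have : (2 : ℕ) ≤ n - 2 := by omega
        exact_mod_cast this
      rw [hHf, hHd]
      nlinarith
    · have hb1 : 1 ≤ b := by omega
      have IH := ih hb1 γ hγ hγ1
      rw [Hf_succ, Hd_succ]
      have hH := Hf_pos n b hb1 hγ
      have hH' := Hd_pos n b hb1 hγ
      have hC := Cc_pos n b
      have hC' := Cc_pos n (b + 1)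
      have hmono := Cc_mono n b
      set h := Hf n b γ with hh
      set h' := Hd n b γ with hh'
      set c := Cc n b with hc
      set c' := Cc n (b + 1) with hc'
      have e1 : γ ^ 2 * c * h ≤ γ * c' * h := by
        have t1 : 0 ≤ γ * h * (c' - c) := mul_nonneg (by positivity) (by linarith)
        have t2 : 0 ≤ γ * h * (c - γ * c) := mul_nonneg (by positivity) (by nlinarith)
        nlinarith [t1, t2]
      have e2 : γ ^ 2 * c * c ≤ c * c' := by
        have t4 : 0 ≤ c * (c' - c) := mul_nonneg hC.le (by linarith)
        have hγ2 : γ ^ 2 ≤ 1 := by nlinarith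
        have t5 : 0 ≤ c * (c - γ ^ 2 * c) := mul_nonneg hC.le
          (by nlinarith [mul_le_mul_of_nonneg_left hγ2 hC.le])
        nlinarith [t4, t5]
      have f1 : γ ^ 2 * c * h * (h + c) ≤ γ * c' * h * (h + c) :=
        mul_le_mul_of_nonneg_right e1 (by positivity)
      have f2 : γ ^ 2 * c * c * (h + c) ≤ c * c' * (h + c) :=
        mul_le_mul_of_nonneg_right e2 (by positivity)
      have f3 : γ * c' * (h * (h + c)) < γ * c' * ((1 + γ) * c * h') :=
        mul_lt_mul_of_pos_left IH (by positivity)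
      have step : c * (γ * (h + c) * (γ * (h + c) + c')) <
          c * ((1 + γ) * c' * (h + c + γ * h')) := by nlinarith [f1, f2, f3]
      exact lt_of_mul_lt_mul_left step hC.le

/-- Key inequality of Appendix D (Corollary 4): the derivative numerator of g
is negative on (0,1]. -/
theorem stmt13 (n B : ℕ) (hn : 4 ≤ n) (hB : 1 ≤ B)
    (h h' : ℝ → ℝ)
    (hh : ∀ γ : ℝ, h γ = ∑ i ∈ Finset.range B, ((n - 3 + i).choose i : ℝ) * γ ^ (B - i))
    (hh' : ∀ γ : ℝ, h' γ = ∑ i ∈ Finset.range B,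
        ((B - i : ℕ) : ℝ) * ((n - 3 + i).choose i : ℝ) * γ ^ (B - i - 1)) :
    ∀ γ : ℝ, 0 < γ → γ ≤ 1 →
      h γ * (h γ + ((n - 3 + B).choose B : ℝ))
        < (1 + γ) * ((n - 3 + B).choose B : ℝ) * h' γ := by
  intro γ h1 h2
  rw [hh, hh']
  exact key_ineq n hn B hB γ h1 h2
end

section
/- Let n ≥ 4 and B ≥ 1 be integers, set C_i = C(n−3+i, i), h(γ) = ∑_{i=0}^{B−1} C_i·γ^{B−i}, and g(γ) = (1+γ)·(1 + C_B/h(γ)) for γ > 0. Then g is strictly decreasing on the interval (0, 1], and consequently every γ* ∈ (0, ∞) satisfying g(γ*) ≤ g(γ) for all γ > 0 satisfies γ* > 1; equivalently, the corresponding optimal transmission ratio α* = 1/(1+γ*) satisfies α* < 1/2. -/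
/-!
Reindexed, `h γ = ∑_{k<B} b_k γ^(k+1)` with `b_k = C_(B-1-k) ≤ C_(B-1) < C_B`. The sign of `g'`
is that of `h² + C_B h - C_B (1+γ) h'`. For `0 < γ ≤ 1`, charging each product
`b_j b_l γ^(j+l)` of `h²` to the larger index bounds `h²` by `C_(B-1) ∑ (2k+1) b_k γ^(k+1)`, and
this sum is at most `(1+γ) h' - h`. Hence `g' < 0` on `(0, 1]`: `g` is strictly decreasing there,
and a global minimiser, where `g'` vanishes, lies beyond `1`.
-/

open Finset Set

lemma strictMono_add_choose {r : ℕ} (hr : 0 < r) : StrictMono fun j => (r + j).choose j :=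
  strictMono_nat_of_lt_succ fun j => by
    change (r + j).choose j < (r + j + 1).choose (j + 1)
    rw [Nat.choose_succ_succ]
    exact Nat.lt_add_of_pos_right (Nat.choose_pos (by omega))

lemma strictAntiOn_of_hasDerivAt_neg {D : Set ℝ} (hD : Convex ℝ D) {f : ℝ → ℝ}
    (hf : ∀ x ∈ D, ∃ d < 0, HasDerivAt f d x) : StrictAntiOn f D := by
  refine strictAntiOn_of_deriv_neg hD (fun x hx => ?_) fun x hx => ?_
  · obtain ⟨d, -, hd⟩ := hf x hx
    exact hd.continuousAt.continuousWithinAt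
  · obtain ⟨d, hneg, hd⟩ := hf x (interior_subset hx)
    rwa [hd.deriv]

section PowerSum

variable {b : ℕ → ℝ} {N : ℕ} {m M x : ℝ}

lemma sum_mul_pow_succ_le (hb0 : ∀ k, 0 ≤ b k) (hbm : ∀ k, b k ≤ m)
    (hx0 : 0 ≤ x) (hx1 : x ≤ 1) : ∑ k ∈ range N, b k * x ^ (k + 1) ≤ N * m := by
  calc ∑ k ∈ range N, b k * x ^ (k + 1) ≤ ∑ _k ∈ range N, m :=
        sum_le_sum fun k _ => (mul_le_mul (hbm k) (pow_le_one₀ hx0 hx1) (pow_nonneg hx0 _)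
          ((hb0 k).trans (hbm k))).trans_eq (mul_one m)
    _ = N * m := by simp

lemma sq_sum_mul_pow_succ_le (hb0 : ∀ k, 0 ≤ b k) (hbm : ∀ k, b k ≤ m)
    (hx0 : 0 ≤ x) (hx1 : x ≤ 1) :
    (∑ k ∈ range N, b k * x ^ (k + 1)) ^ 2 ≤ m * ∑ k ∈ range N, (2 * k + 1) * b k * x ^ (k + 1) := by
  induction N with
  | zero => simp
  | succ N ih =>
    have hS := sum_mul_pow_succ_le (N := N) hb0 hbm hx0 hx1
    have hS0 : 0 ≤ ∑ k ∈ range N, b k * x ^ (k + 1) :=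
      sum_nonneg fun k _ => mul_nonneg (hb0 k) (pow_nonneg hx0 _)
    have hp0 : 0 ≤ x ^ (N + 1) := pow_nonneg hx0 _
    have hp1 : x ^ (N + 1) ≤ 1 := pow_le_one₀ hx0 hx1
    have hbx : 0 ≤ b N * x ^ (N + 1) := mul_nonneg (hb0 N) hp0
    rw [sum_range_succ, sum_range_succ, mul_add]
    nlinarith [mul_le_mul_of_nonneg_left hS (by positivity : 0 ≤ 2 * (b N * x ^ (N + 1))),
      mul_le_mul hp1 (hbm N) (hb0 N) zero_le_one, mul_nonneg hbx hbx]

lemma hasDerivAt_sum_mul_pow_succ (b : ℕ → ℝ) (N : ℕ) (x : ℝ) :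
    HasDerivAt (fun x => ∑ k ∈ range N, b k * x ^ (k + 1))
      (∑ k ∈ range N, b k * ((k + 1) * x ^ k)) x := by
  refine HasDerivAt.fun_sum fun k _ => ?_
  simpa using (hasDerivAt_pow (k + 1) x).const_mul (b k)

lemma sq_add_mul_sum_lt (hN : 0 < N) (hb : ∀ k, 0 < b k) (hbm : ∀ k, b k ≤ m) (hmM : m < M)
    (hx0 : 0 < x) (hx1 : x ≤ 1) :
    (∑ k ∈ range N, b k * x ^ (k + 1)) ^ 2 + M * ∑ k ∈ range N, b k * x ^ (k + 1)
      < M * ((1 + x) * ∑ k ∈ range N, b k * ((k + 1) * x ^ k)) := by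
  set S := ∑ k ∈ range N, (2 * k + 1) * b k * x ^ (k + 1)
  have hS : 0 < S := sum_pos (fun k _ => by have := hb k; positivity) ⟨0, mem_range.2 hN⟩
  have hsq := sq_sum_mul_pow_succ_le (N := N) (fun k => (hb k).le) hbm hx0.le hx1
  have hM : 0 < M := ((hb 0).trans_le (hbm 0)).trans hmM
  have hterm : S + ∑ k ∈ range N, b k * x ^ (k + 1)
      ≤ (1 + x) * ∑ k ∈ range N, b k * ((k + 1) * x ^ k) := by
    rw [← sum_add_distrib, mul_sum]
    refine sum_le_sum fun k _ => ?_
    have hxk : x ^ (k + 1) ≤ x ^ k := pow_le_pow_of_le_one hx0.le hx1 k.le_succ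
    have := (hb k).le
    rw [pow_succ] at hxk ⊢
    nlinarith [mul_le_mul_of_nonneg_left hxk (by positivity : 0 ≤ b k * (k + 1))]
  nlinarith [mul_lt_mul_of_pos_right hmM hS, mul_le_mul_of_nonneg_left hterm hM.le]

lemma exists_neg_hasDerivAt_one_add_mul_one_add_div (hN : 0 < N) (hb : ∀ k, 0 < b k) (hbm : ∀ k, b k ≤ m) (hmM : m < M)
    (hx0 : 0 < x) (hx1 : x ≤ 1) :
    ∃ d < 0, HasDerivAt (fun x => (1 + x) * (1 + M / ∑ k ∈ range N, b k * x ^ (k + 1))) d x := by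
  set P := ∑ k ∈ range N, b k * x ^ (k + 1)
  set P' := ∑ k ∈ range N, b k * ((k + 1) * x ^ k)
  have hP : 0 < P := sum_pos (fun k _ => by have := hb k; positivity) ⟨0, mem_range.2 hN⟩
  refine ⟨(1 + M / P) + (1 + x) * (-(M * P') / P ^ 2), ?_, ?_⟩
  · have key : P ^ 2 + M * P < M * ((1 + x) * P') := sq_add_mul_sum_lt hN hb hbm hmM hx0 hx1
    have hform : 1 + M / P + (1 + x) * (-(M * P') / P ^ 2)
        = (P ^ 2 + M * P - M * ((1 + x) * P')) / P ^ 2 := by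
      field_simp
      ring
    rw [hform]
    exact div_neg_of_neg_of_pos (by linarith) (by positivity)
  · have hquot := (((hasDerivAt_sum_mul_pow_succ b N x).inv hP.ne').const_mul M).const_add 1
    refine (((hasDerivAt_id x).const_add 1).mul hquot).congr_deriv ?_
    simp only [Pi.inv_apply, id, one_mul]
    ring

end PowerSum

/-- Corollary 4: g is strictly decreasing on (0,1], so the optimal γ* exceeds 1
and the optimal transmission ratio α* = 1/(1+γ*) is below 1/2. -/
theorem stmt14 (n B : ℕ) (hn : 4 ≤ n) (hB : 1 ≤ B)
    (h g : ℝ → ℝ)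
    (hh : ∀ γ : ℝ, h γ = ∑ i ∈ Finset.range B, ((n - 3 + i).choose i : ℝ) * γ ^ (B - i))
    (hg : ∀ γ : ℝ, 0 < γ →
      g γ = (1 + γ) * (1 + ((n - 3 + B).choose B : ℝ) / h γ)) :
    StrictAntiOn g (Set.Ioc 0 1) ∧
    ∀ γs : ℝ, 0 < γs → (∀ γ : ℝ, 0 < γ → g γs ≤ g γ) →
      1 < γs ∧ 1 / (1 + γs) < 1 / 2 := by
  set C : ℕ → ℝ := fun i => ((n - 3 + i).choose i : ℝ)
  have hC : StrictMono C := Nat.strictMono_cast.comp (strictMono_add_choose (by omega))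
  have hh' : ∀ γ, h γ = ∑ k ∈ range B, C (B - 1 - k) * γ ^ (k + 1) := fun γ => by
    rw [hh, ← sum_range_reflect]
    exact sum_congr rfl fun k hk => by rw [show B - (B - 1 - k) = k + 1 by grind]
  have hderiv : ∀ x ∈ Ioc (0 : ℝ) 1, ∃ d < 0, HasDerivAt g d x := by
    rintro x ⟨hx0, hx1⟩
    obtain ⟨d, hd, hG⟩ := exists_neg_hasDerivAt_one_add_mul_one_add_div (b := fun k => C (B - 1 - k)) hB
      (fun k => Nat.cast_pos.2 (Nat.choose_pos (by omega)))
      (fun k => hC.monotone (Nat.sub_le _ _)) (hC (Nat.sub_one_lt_of_lt hB)) hx0 hx1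
    refine ⟨d, hd, hG.congr_of_eventuallyEq ?_⟩
    filter_upwards [Ioi_mem_nhds hx0] with γ hγ
    rw [hg γ hγ, hh']
  refine ⟨strictAntiOn_of_hasDerivAt_neg (convex_Ioc 0 1) hderiv, fun γs hγs hmin => ?_⟩
  have h1 : 1 < γs := by
    by_contra! hle
    obtain ⟨d, hd, hgd⟩ := hderiv γs ⟨hγs, hle⟩
    have hloc : IsLocalMin g γs := Filter.mem_of_superset (Ioi_mem_nhds hγs) hmin
    exact hd.ne (hloc.hasDerivAt_eq_zero hgd)
  exact ⟨h1, one_div_lt_one_div_of_lt two_pos (by linarith)⟩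
end

section
/- Fix an integer B ≥ 1 and a real β > 0, and for each integer n ≥ 3 set C_i(n) = C(n−3+i, i). Then the sequence n ↦ n · (∑_{i=0}^{B−1} C_i(n)·β^i) / (∑_{i=0}^{B} C_i(n)·β^i) tends to B/β as n → ∞. -/
/-!
Since `C(m, i) ~ m ^ i / i!` and `n - 3 + i ~ n`, the sum `∑_{i ≤ k} C_i(n) β ^ i` is dominated by
its top term: divided by `n ^ k` it tends to `β ^ k / k!`. Dividing the sum up to `B - 1` by the
sum up to `B` therefore gives `n` times a quantity tending to
`(β ^ (B - 1) / (B - 1)!) / (β ^ B / B!) = B / β`.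
-/

open Filter Finset Asymptotics Topology

lemma natCast_sub_add_isEquivalent (c d : ℕ) :
    (fun n : ℕ => ((n - c + d : ℕ) : ℝ)) ~[atTop] (fun n => (n : ℝ)) := by
  have h : (fun n : ℕ => (n : ℝ) + ((d : ℝ) - c)) ~[atTop] (fun n => (n : ℝ)) :=
    IsEquivalent.refl.add_isLittleO
      ((isLittleO_const_id_atTop _).comp_tendsto tendsto_natCast_atTop_atTop)
  refine h.congr_left ?_
  filter_upwards [eventually_ge_atTop c] with n hn
  push_cast [hn]
  ring

lemma isEquivalent_choose_sub_add (c i : ℕ) :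
    (fun n : ℕ => ((n - c + i).choose i : ℝ)) ~[atTop]
      (fun n : ℕ => (n : ℝ) ^ i / i.factorial) :=
  ((isEquivalent_choose i).comp_tendsto
      (tendsto_atTop_mono (fun _ => Nat.le_add_right _ i) (tendsto_sub_atTop_nat c))).trans
    (((natCast_sub_add_isEquivalent c i).pow i).div IsEquivalent.refl)

lemma tendsto_choose_sub_add_div_pow (c i : ℕ) :
    Tendsto (fun n : ℕ => ((n - c + i).choose i : ℝ) / (n : ℝ) ^ i) atTop
      (𝓝 (i.factorial : ℝ)⁻¹) := by
  refine ((isEquivalent_choose_sub_add c i).div IsEquivalent.refl).symm.tendsto_nhds ?_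
  refine tendsto_const_nhds.congr' ?_
  filter_upwards [eventually_ne_atTop 0] with n hn
  simp [div_div_cancel_left', hn]

lemma tendsto_sum_range_succ_div_pow {f : ℕ → ℕ → ℝ} {a : ℕ → ℝ} (k : ℕ)
    (hf : ∀ i, Tendsto (fun n : ℕ => f i n / (n : ℝ) ^ i) atTop (𝓝 (a i))) :
    Tendsto (fun n : ℕ => (∑ i ∈ range (k + 1), f i n) / (n : ℝ) ^ k) atTop (𝓝 (a k)) := by
  have hterm : ∀ i ∈ range (k + 1),
      Tendsto (fun n : ℕ => f i n / (n : ℝ) ^ i * (n : ℝ)⁻¹ ^ (k - i)) atTop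
        (𝓝 (a i * 0 ^ (k - i))) :=
    fun i _ => (hf i).mul (tendsto_inv_atTop_nhds_zero_nat.pow _)
  have hsum := tendsto_finsetSum _ hterm
  rw [sum_eq_single_of_mem k (self_mem_range_succ k) fun i hi hik => by
    rw [zero_pow (by grind), mul_zero], Nat.sub_self, pow_zero, mul_one] at hsum
  refine hsum.congr' ?_
  filter_upwards [eventually_ne_atTop 0] with n hn
  rw [sum_div]
  refine sum_congr rfl fun i hi => ?_
  have hn : (n : ℝ) ≠ 0 := by exact_mod_cast hn
  rw [inv_pow_sub₀ hn (Nat.lt_succ_iff.mp (mem_range.mp hi))]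
  field_simp

lemma tendsto_natCast_mul_div_of_tendsto_div_pow {u v : ℕ → ℝ} {x y : ℝ} {k : ℕ}
    (hu : Tendsto (fun n : ℕ => u n / (n : ℝ) ^ k) atTop (𝓝 x))
    (hv : Tendsto (fun n : ℕ => v n / (n : ℝ) ^ (k + 1)) atTop (𝓝 y)) (hy : y ≠ 0) :
    Tendsto (fun n : ℕ => (n : ℝ) * (u n / v n)) atTop (𝓝 (x / y)) := by
  refine (hu.div hv hy).congr' ?_
  filter_upwards [eventually_ne_atTop 0] with n hn
  have hn : (n : ℝ) ≠ 0 := by exact_mod_cast hn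
  simp only [Pi.div_apply]
  rw [pow_succ, div_div_div_eq]
  field_simp

theorem stmt15_general (B : ℕ) (β : ℝ) (hβ : 0 < β) :
    Filter.Tendsto (fun n : ℕ => (n : ℝ) *
        ((∑ i ∈ Finset.range B, ((n - 3 + i).choose i : ℝ) * β ^ i)
          / ∑ i ∈ Finset.range (B + 1), ((n - 3 + i).choose i : ℝ) * β ^ i))
      Filter.atTop (nhds ((B : ℝ) / β)) := by
  cases B with
  | zero => simp
  | succ k =>
    have hterm (i : ℕ) : Tendsto (fun n : ℕ => ((n - 3 + i).choose i : ℝ) * β ^ i / (n : ℝ) ^ i)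
        atTop (𝓝 ((i.factorial : ℝ)⁻¹ * β ^ i)) := by
      simpa only [mul_div_right_comm] using (tendsto_choose_sub_add_div_pow 3 i).mul_const (β ^ i)
    convert tendsto_natCast_mul_div_of_tendsto_div_pow (tendsto_sum_range_succ_div_pow k hterm)
      (tendsto_sum_range_succ_div_pow (k + 1) hterm) (by positivity) using 2
    push_cast [Nat.factorial_succ]
    field_simp
    ring

/-- Scaling-law limit from the proof of Corollary 5 (Appendix E). -/
theorem stmt15 (B : ℕ) (hB : 1 ≤ B) (β : ℝ) (hβ : 0 < β) :
    Filter.Tendsto (fun n : ℕ => (n : ℝ) *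
        ((∑ i ∈ Finset.range B, ((n - 3 + i).choose i : ℝ) * β ^ i)
          / ∑ i ∈ Finset.range (B + 1), ((n - 3 + i).choose i : ℝ) * β ^ i))
      Filter.atTop (nhds ((B : ℝ) / β)) :=
  stmt15_general B β hβ
end
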